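/- arXiv:math/0309278 — 4 statements merged into one kernel-verified Lean document; each statement's English description precedes it below -/
import Mathlib

section
/- Let A be an n×m real matrix with unit rows that is strictly feasible (there exists x with Ax < 0 componentwise). Then the smallest circular cap containing all rows of A is unique. -/
open Real Set
open scoped RealInnerProductSpace

/-- `IsSCP a p ϱ`: the cap with centre `p` and angular radius `ϱ` is a smallest circular
cap containing all the points `a i`. -/
noncomputable def IsSCP {m n : ℕ} (a : Fin n → EuclideanSpace ℝ (Fin m))
    (p : EuclideanSpace ℝ (Fin m)) (ϱ : ℝ) : Prop :=
  ‖p‖ = 1 ∧ ϱ = ⨆ i, Real.arccos (⟪p, a i⟫) ∧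
    ∀ q : EuclideanSpace ℝ (Fin m), ‖q‖ = 1 → ϱ ≤ ⨆ i, Real.arccos (⟪q, a i⟫)

theorem stmt2 {m n : ℕ} (hm : 0 < m) (hn : 0 < n)
    (a : Fin n → EuclideanSpace ℝ (Fin m)) (ha : ∀ i, ‖a i‖ = 1)
    (hfeas : ∃ x : EuclideanSpace ℝ (Fin m), ∀ i, ⟪a i, x⟫ < 0)
    (p₁ p₂ : EuclideanSpace ℝ (Fin m)) (ϱ₁ ϱ₂ : ℝ)
    (h₁ : IsSCP a p₁ ϱ₁) (h₂ : IsSCP a p₂ ϱ₂) :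
    p₁ = p₂ ∧ ϱ₁ = ϱ₂ := by
  haveI : Nonempty (Fin n) := ⟨⟨0, hn⟩⟩
  obtain ⟨hp₁, hϱ₁, hmin₁⟩ := h₁
  obtain ⟨hp₂, hϱ₂, hmin₂⟩ := h₂
  have hϱeq : ϱ₁ = ϱ₂ :=
    le_antisymm (hϱ₂ ▸ hmin₁ p₂ hp₂) (hϱ₁ ▸ hmin₂ p₁ hp₁)
  refine ⟨?_, hϱeq⟩
  -- bound the inner products by 1
  have habs : ∀ (q : EuclideanSpace ℝ (Fin m)), ‖q‖ = 1 → ∀ i, |⟪q, a i⟫| ≤ 1 := by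
    intro q hq i
    calc |⟪q, a i⟫| ≤ ‖q‖ * ‖a i‖ := abs_real_inner_le_norm q (a i)
    _ = 1 := by rw [hq, ha i, one_mul]
  -- ϱ₁ < π / 2 from strict feasibility
  obtain ⟨x, hx⟩ := hfeas
  have hx0 : x ≠ 0 := by
    intro h
    have := hx ⟨0, hn⟩
    rw [h, inner_zero_right] at this
    exact lt_irrefl 0 this
  have hxn : 0 < ‖x‖ := norm_pos_iff.mpr hx0
  set q₀ : EuclideanSpace ℝ (Fin m) := ‖x‖⁻¹ • (-x) with hq₀def
  have hq₀ : ‖q₀‖ = 1 := by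
    rw [hq₀def, norm_smul, norm_neg, norm_inv, norm_norm, inv_mul_cancel₀ hxn.ne']
  have hq₀i : ∀ i, 0 < ⟪q₀, a i⟫ := by
    intro i
    have : ⟪q₀, a i⟫ = ‖x‖⁻¹ * -⟪a i, x⟫ := by
      rw [hq₀def, real_inner_smul_left, inner_neg_left, real_inner_comm]
    rw [this]
    have h2 : (0:ℝ) < -⟪a i, x⟫ := by linarith [hx i]
    exact mul_pos (inv_pos.mpr hxn) h2
  have hϱlt : ϱ₁ < π / 2 := by
    obtain ⟨i₀, hi₀⟩ := Finite.exists_max (fun i => Real.arccos (⟪q₀, a i⟫))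
    calc ϱ₁ ≤ ⨆ i, Real.arccos (⟪q₀, a i⟫) := hmin₁ q₀ hq₀
    _ ≤ Real.arccos (⟪q₀, a i₀⟫) := ciSup_le hi₀
    _ < π / 2 := Real.arccos_lt_pi_div_two.mpr (hq₀i i₀)
  have hϱ0 : 0 ≤ ϱ₁ := by
    rw [hϱ₁]
    exact le_trans (Real.arccos_nonneg _)
      (le_ciSup (f := fun i => Real.arccos (⟪p₁, a i⟫))
        (Set.Finite.bddAbove (Set.finite_range _)) ⟨0, hn⟩)
  have hc : 0 < Real.cos ϱ₁ := Real.cos_pos_of_mem_Ioo ⟨by linarith [Real.pi_pos], hϱlt⟩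
  -- each centre sees every point within angle ϱ₁
  have hinner : ∀ (q : EuclideanSpace ℝ (Fin m)), ‖q‖ = 1 →
      (ϱ₁ = ⨆ i, Real.arccos (⟪q, a i⟫)) → ∀ i, Real.cos ϱ₁ ≤ ⟪q, a i⟫ := by
    intro q hq hform i
    have h1 : Real.arccos (⟪q, a i⟫) ≤ ϱ₁ := by
      rw [hform]
      exact le_ciSup (f := fun i => Real.arccos (⟪q, a i⟫))
        (Set.Finite.bddAbove (Set.finite_range _)) i
    have h2 := habs q hq i
    have h3 : Real.cos ϱ₁ ≤ Real.cos (Real.arccos (⟪q, a i⟫)) := by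
      apply Real.cos_le_cos_of_nonneg_of_le_pi (Real.arccos_nonneg _) _ h1
      linarith [Real.pi_pos]
    rwa [Real.cos_arccos (by linarith [abs_le.mp h2]) (by linarith [abs_le.mp h2])] at h3
  have hi₁ := hinner p₁ hp₁ hϱ₁
  have hi₂ := hinner p₂ hp₂ (hϱeq ▸ hϱ₂)
  -- now suppose p₁ ≠ p₂
  by_contra hne
  have hlt1 : ⟪p₁, p₂⟫ < 1 := by
    have h := norm_sub_sq_real p₁ p₂
    rw [hp₁, hp₂] at h
    have hpos : 0 < ‖p₁ - p₂‖ ^ 2 :=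
      pow_pos (norm_pos_iff.mpr (sub_ne_zero.mpr hne)) 2
    nlinarith
  have hsum : ‖p₁ + p₂‖ ^ 2 = 2 + 2 * ⟪p₁, p₂⟫ := by
    have h := norm_add_sq_real p₁ p₂
    rw [hp₁, hp₂] at h
    linarith
  have hs0 : 0 < ‖p₁ + p₂‖ := by
    rw [norm_pos_iff]
    intro h
    have hp21 : p₂ = -p₁ := by
      have := eq_neg_of_add_eq_zero_right h
      rw [this]
    have h1 := hi₁ ⟨0, hn⟩
    have h2 := hi₂ ⟨0, hn⟩
    rw [hp21, inner_neg_left] at h2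
    linarith
  have hs2 : ‖p₁ + p₂‖ < 2 := by
    nlinarith
  set s : ℝ := ‖p₁ + p₂‖ with hs
  set p : EuclideanSpace ℝ (Fin m) := s⁻¹ • (p₁ + p₂) with hpdef
  have hp : ‖p‖ = 1 := by
    rw [hpdef, norm_smul, norm_inv, norm_norm, ← hs, inv_mul_cancel₀ hs0.ne']
  have hkey : ∀ i, Real.arccos (⟪p, a i⟫) < ϱ₁ := by
    intro i
    have hip : ⟪p, a i⟫ = s⁻¹ * (⟪p₁, a i⟫ + ⟪p₂, a i⟫) := by
      rw [hpdef, real_inner_smul_left, inner_add_left]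
    have hgt : Real.cos ϱ₁ < ⟪p, a i⟫ := by
      rw [hip]
      have h1 := hi₁ i
      have h2 := hi₂ i
      rw [lt_inv_mul_iff₀ hs0]
      nlinarith
    have hle1 : ⟪p, a i⟫ ≤ 1 := by
      have := habs p hp i
      linarith [abs_le.mp this]
    have : Real.arccos (⟪p, a i⟫) < Real.arccos (Real.cos ϱ₁) := by
      apply Real.strictAntiOn_arccos _ _ hgt
      · constructor
        · exact neg_one_le_cos ϱ₁
        · exact Real.cos_le_one ϱ₁
      · constructor
        · linarith [hc]
        · exact hle1
    rwa [Real.arccos_cos hϱ0 (by linarith [Real.pi_pos])] at this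
  obtain ⟨i₀, hi₀⟩ := Finite.exists_max (fun i => Real.arccos (⟪p, a i⟫))
  have : ϱ₁ < ϱ₁ := by
    calc ϱ₁ ≤ ⨆ i, Real.arccos (⟪p, a i⟫) := hmin₁ p hp
    _ ≤ Real.arccos (⟪p, a i₀⟫) := ciSup_le hi₀
    _ < ϱ₁ := hkey i₀
  exact lt_irrefl _ this
end

section
/- Let A be an n×m real matrix with unit rows, n ≥ m, and suppose A is infeasible (there is no x ≠ 0 with Ax ≤ 0). Let cap(p,ρ) be a largest circular cap excluding the rows of A, and let S = {i : a_i ∈ ∂cap(p,ρ)} be its blocking set. Then |S| ≥ m. -/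
open Real Set
open scoped RealInnerProductSpace

theorem stmt3 {m n : ℕ} (hm : 0 < m) (hmn : m ≤ n)
    (a : Fin n → EuclideanSpace ℝ (Fin m)) (ha : ∀ i, ‖a i‖ = 1)
    (hinf : ¬ ∃ x : EuclideanSpace ℝ (Fin m), x ≠ 0 ∧ ∀ i, ⟪a i, x⟫ ≤ 0)
    (p : EuclideanSpace ℝ (Fin m)) (hp : ‖p‖ = 1) (ρ : ℝ)
    (hρ : ρ = ⨅ i, Real.arccos (⟪p, a i⟫))
    (hmax : ∀ q : EuclideanSpace ℝ (Fin m), ‖q‖ = 1 →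
      (⨅ i, Real.arccos (⟪q, a i⟫)) ≤ ρ) :
    m ≤ Finset.card {i : Fin n | ⟪a i, p⟫ = Real.cos ρ} := by
  by_contra hcard
  push_neg at hcard
  have hn : 0 < n := lt_of_lt_of_le hm hmn
  haveI : Nonempty (Fin n) := ⟨⟨0, hn⟩⟩
  set S : Finset (Fin n) := {i : Fin n | ⟪a i, p⟫ = Real.cos ρ} with hS
  have hmemS : ∀ i, i ∈ S ↔ ⟪a i, p⟫ = Real.cos ρ := by intro i; simp [hS]
  -- basic bounds on ρ
  have hbdd : BddBelow (Set.range fun i => Real.arccos ⟪p, a i⟫) :=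
    (Set.finite_range _).bddBelow
  have hle : ∀ i, ρ ≤ Real.arccos ⟪p, a i⟫ := fun i => hρ ▸ ciInf_le hbdd i
  have hρ0 : 0 ≤ ρ := hρ ▸ le_ciInf fun i => Real.arccos_nonneg _
  have hρπ : ρ ≤ π := le_trans (hle ⟨0, hn⟩) (Real.arccos_le_pi _)
  have hmem11 : ∀ (q : EuclideanSpace ℝ (Fin m)), ‖q‖ = 1 → ∀ i,
      ⟪q, a i⟫ ∈ Set.Icc (-1 : ℝ) 1 := by
    intro q hq i
    have h := abs_real_inner_le_norm q (a i)
    rw [hq, ha i, one_mul] at h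
    exact abs_le.mp h
  have hinner_le : ∀ i, ⟪p, a i⟫ ≤ Real.cos ρ := by
    intro i
    have h1 := hmem11 p hp i
    have h2 : Real.cos (Real.arccos ⟪p, a i⟫) ≤ Real.cos ρ :=
      Real.cos_le_cos_of_nonneg_of_le_pi hρ0 (Real.arccos_le_pi _) (hle i)
    rwa [Real.cos_arccos h1.1 h1.2] at h2
  -- cos ρ > 0 from infeasibility
  have hcos : 0 < Real.cos ρ := by
    by_contra h
    push_neg at h
    exact hinf ⟨p, fun h0 => by simp [h0] at hp, fun i =>
      le_trans (by rw [real_inner_comm]; exact hinner_le i) h⟩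
  -- find a unit vector orthogonal to all a i, i ∈ S, with ⟪p,v⟫ ≥ 0
  classical
  have hspan : Module.finrank ℝ
      (Submodule.span ℝ ((S.image a : Finset (EuclideanSpace ℝ (Fin m))) : Set (EuclideanSpace ℝ (Fin m)))) < m := by
    have h1 := finrank_span_finset_le_card (R := ℝ) (S.image a)
    rw [Set.finrank] at h1
    exact lt_of_le_of_lt (le_trans h1 Finset.card_image_le) hcard
  set W := Submodule.span ℝ ((S.image a : Finset (EuclideanSpace ℝ (Fin m))) : Set (EuclideanSpace ℝ (Fin m))) with hW
  have hWtop : W ≠ ⊤ := by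
    intro h
    have h2 : Module.finrank ℝ W < m := hspan
    rw [h, finrank_top, finrank_euclideanSpace_fin] at h2
    exact lt_irrefl _ h2
  have hWperp : Wᗮ ≠ ⊥ := by
    intro h
    exact hWtop (Submodule.orthogonal_eq_bot_iff.mp h)
  obtain ⟨v0, hv0W, hv0⟩ := Submodule.ne_bot_iff _ |>.mp hWperp
  have hv0n : ‖v0‖ ≠ 0 := norm_ne_zero_iff.mpr hv0
  set u : EuclideanSpace ℝ (Fin m) := ‖v0‖⁻¹ • v0 with hu
  have hun : ‖u‖ = 1 := by
    rw [hu, norm_smul, norm_inv, norm_norm, inv_mul_cancel₀ hv0n]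
  have huW : u ∈ Wᗮ := Submodule.smul_mem _ _ hv0W
  set v : EuclideanSpace ℝ (Fin m) := if 0 ≤ ⟪p, u⟫ then u else -u with hv
  have hvn : ‖v‖ = 1 := by
    rw [hv]; split <;> simp [hun]
  have hvW : v ∈ Wᗮ := by
    rw [hv]; split
    · exact huW
    · exact Submodule.neg_mem _ huW
  have hpv : 0 ≤ ⟪p, v⟫ := by
    rw [hv]; split
    · assumption
    · rw [inner_neg_right]; linarith [not_le.mp (by assumption)]
  have hvS : ∀ i ∈ S, ⟪a i, v⟫ = 0 := by
    intro i hi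
    have hai : a i ∈ W := Submodule.subset_span (by
      simp only [Finset.coe_image, Set.mem_image]
      exact ⟨i, by simpa using hi, rfl⟩)
    exact (Submodule.mem_orthogonal _ _).mp hvW _ hai
  -- choose ε
  set f : Fin n → ℝ := fun i =>
    if i ∈ S then 1 else (Real.cos ρ - ⟪p, a i⟫) / (|⟪a i, v⟫| + 1) with hf
  have hfpos : ∀ i, 0 < f i := by
    intro i
    rw [hf]
    by_cases hiS : i ∈ S
    · simp [hiS]
    · simp only [hiS, if_false]
      apply div_pos
      · have h1 : ⟪p, a i⟫ ≤ Real.cos ρ := hinner_le i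
        have h2 : ⟪p, a i⟫ ≠ Real.cos ρ := by
          intro h
          exact hiS ((hmemS i).mpr (by rw [real_inner_comm]; exact h))
        linarith [lt_of_le_of_ne h1 h2]
      · positivity
  set ε : ℝ := Finset.univ.inf' ⟨⟨0, hn⟩, Finset.mem_univ _⟩ f with hε
  have hεpos : 0 < ε := by
    rw [hε]
    exact (Finset.lt_inf'_iff _).mpr fun i _ => hfpos i
  have hεle : ∀ i, ε ≤ f i := fun i => Finset.inf'_le _ (Finset.mem_univ i)
  -- the perturbed vector
  set w : EuclideanSpace ℝ (Fin m) := p + ε • v with hw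
  have hc2 : ‖w‖ ^ 2 = 1 + 2 * (ε * ⟪p, v⟫) + ε ^ 2 := by
    rw [hw, @norm_add_sq_real, hp, real_inner_smul_right, norm_smul,
      Real.norm_eq_abs, abs_of_pos hεpos, hvn]
    ring
  have hc1 : 1 < ‖w‖ := by
    nlinarith [hεpos, hpv, norm_nonneg w, hc2]
  have hcpos : (0:ℝ) < ‖w‖ := lt_trans one_pos hc1
  set q : EuclideanSpace ℝ (Fin m) := ‖w‖⁻¹ • w with hq
  have hqn : ‖q‖ = 1 := by
    rw [hq, norm_smul, norm_inv, norm_norm, inv_mul_cancel₀ (ne_of_gt hcpos)]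
  -- key inequality
  have hkey : ∀ i, ⟪q, a i⟫ < Real.cos ρ := by
    intro i
    have hwa : ⟪w, a i⟫ ≤ Real.cos ρ := by
      rw [hw, inner_add_left, real_inner_smul_left]
      by_cases hiS : i ∈ S
      · have h1 : ⟪a i, p⟫ = Real.cos ρ := (hmemS i).mp hiS
        have h2 : ⟪a i, v⟫ = 0 := hvS i hiS
        have h1' : (⟪p, a i⟫ : ℝ) = Real.cos ρ := by rw [real_inner_comm]; exact h1
        have h2' : (⟪v, a i⟫ : ℝ) = 0 := by rw [real_inner_comm]; exact h2
        rw [h1', h2']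
        linarith
      · have h1 : ε ≤ (Real.cos ρ - ⟪p, a i⟫) / (|⟪a i, v⟫| + 1) := by
          have h0 := hεle i
          simp only [hf] at h0
          rwa [if_neg hiS] at h0
        have h2 : (0:ℝ) < |⟪a i, v⟫| + 1 := by positivity
        have h3 : ε * (|⟪a i, v⟫| + 1) ≤ Real.cos ρ - ⟪p, a i⟫ :=
          (le_div_iff₀ h2).mp h1
        have h4 : ε * ⟪v, a i⟫ ≤ ε * (|⟪a i, v⟫| + 1) := by
          apply mul_le_mul_of_nonneg_left _ (le_of_lt hεpos)
          rw [real_inner_comm]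
          calc ⟪a i, v⟫ ≤ |⟪a i, v⟫| := le_abs_self _
            _ ≤ |⟪a i, v⟫| + 1 := by linarith
        linarith
    have hqa : ⟪q, a i⟫ = ‖w‖⁻¹ * ⟪w, a i⟫ := by
      rw [hq, real_inner_smul_left]
    rw [hqa]
    have hinv1 : ‖w‖⁻¹ < 1 := by
      rw [inv_lt_one_iff₀]; right; exact hc1
    have hinvpos : 0 < ‖w‖⁻¹ := inv_pos.mpr hcpos
    nlinarith
  -- contradiction with hmax
  have hgt : ∀ i, ρ < Real.arccos ⟪q, a i⟫ := by
    intro i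
    have h1 := hmem11 q hqn i
    have h2 : Real.cos ρ ∈ Set.Icc (-1:ℝ) 1 := ⟨Real.neg_one_le_cos _, Real.cos_le_one _⟩
    have := Real.strictAntiOn_arccos h1 h2 (hkey i)
    rwa [Real.arccos_cos hρ0 hρπ] at this
  obtain ⟨i0, hi0⟩ := Finite.exists_min fun i => Real.arccos ⟪q, a i⟫
  have h1 : Real.arccos ⟪q, a i0⟫ ≤ ⨅ i, Real.arccos ⟪q, a i⟫ := le_ciInf hi0
  have h2 := hmax q hqn
  linarith [hgt i0]
end

section
/- Let a_1,...,a_m be linearly independent unit vectors in ℝ^m all lying on ∂cap(p,ρ) for some p ∈ S^{m-1} and ρ ∈ [0,π/2). Let π_p be the orthogonal projection of ℝ^m onto the hyperplane p^⊥. Then cap(p,ρ) is the smallest circular cap containing {a_1,...,a_m} if and only if 0 lies in the convex hull of {π_p a_1,...,π_p a_m}. -/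
/-!
Write `a i = cos ρ • p + π_p (a i)`. If `0` is a convex combination of the `π_p (a i)`, then for
every unit `q` some `⟪q, π_p (a i)⟫ ≤ 0`, hence `⟪q, a i⟫ ≤ cos ρ ⟪q, p⟫ ≤ cos ρ`: no cap of radius
`< ρ` contains all `a i`. Otherwise a vector `w ⟂ p` strictly separates `0` from the `π_p (a i)`,
and tilting `p` slightly towards `w` gives a centre `q` with `⟪q, a i⟫ > cos ρ` for all `i`.
-/

open Real Set
open scoped RealInnerProductSpace

theorem le_ciSup_iff_exists_le {ι α : Type*} [Finite ι] [Nonempty ι]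
    [ConditionallyCompleteLinearOrder α] {f : ι → α} {a : α} :
    a ≤ ⨆ i, f i ↔ ∃ i, a ≤ f i := by
  refine ⟨fun h => ?_, fun ⟨i, hi⟩ => hi.trans (le_ciSup (Finite.bddAbove_range f) i)⟩
  obtain ⟨i, hi⟩ := exists_eq_ciSup_of_finite (f := f)
  exact ⟨i, hi ▸ h⟩

theorem Real.le_arccos_iff_le_cos {x ρ : ℝ} (hx₁ : -1 ≤ x) (hx₂ : x ≤ 1) (hρ₀ : 0 ≤ ρ)
    (hρ : ρ ≤ π) : ρ ≤ arccos x ↔ x ≤ cos ρ := by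
  conv_lhs => rw [← arccos_cos hρ₀ hρ]
  exact strictAntiOn_arccos.le_iff_ge ⟨neg_one_le_cos ρ, cos_le_one ρ⟩ ⟨hx₁, hx₂⟩

section InnerProductSpace

variable {E : Type*} [NormedAddCommGroup E] [InnerProductSpace ℝ E]

theorem exists_inner_nonpos_of_zero_mem_convexHull {ι : Type*} {f : ι → E}
    (h : (0 : E) ∈ convexHull ℝ (range f)) (q : E) : ∃ i, ⟪q, f i⟫ ≤ 0 := by
  by_contra! hpos
  have hsub : convexHull ℝ (range f) ⊆ {x | 0 < ⟪q, x⟫} :=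
    convexHull_min (range_subset_iff.2 hpos) (convex_halfSpace_gt (innerₛₗ ℝ q).isLinear 0)
  simpa using hsub h

theorem exists_pos_lt_inner_of_zero_notMem_convexHull [CompleteSpace E] {ι : Type*} [Finite ι]
    {f : ι → E} (h : (0 : E) ∉ convexHull ℝ (range f)) :
    ∃ v : E, ∃ u > 0, ∀ i, u < ⟪v, f i⟫ := by
  obtain ⟨g, u, hg0, hg⟩ := geometric_hahn_banach_point_closed (convex_convexHull ℝ _)
    (((finite_range f).isCompact_convexHull ℝ).isClosed) h
  refine ⟨(InnerProductSpace.toDual ℝ E).symm g, u, by simpa using hg0, fun i => ?_⟩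
  rw [InnerProductSpace.toDual_symm_apply]
  exact hg _ (subset_convexHull ℝ _ (mem_range_self i))

theorem exists_norm_eq_one_lt_inner_of_inner_eq_zero {p w : E} (hp : ‖p‖ = 1) (hpw : ⟪p, w⟫ = 0)
    {c u : ℝ} (hc₀ : 0 ≤ c) (hc₁ : c ≤ 1) (hu : 0 < u) :
    ∃ q : E, ‖q‖ = 1 ∧ ∀ x, ⟪p, x⟫ = c → u < ⟪w, x⟫ → c < ⟪q, x⟫ := by
  set t := u / ‖w‖ ^ 2
  set z := p + t • w
  have hpp : ⟪p, p⟫ = 1 := by rw [real_inner_self_eq_norm_sq, hp, one_pow]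
  have hz : z ≠ 0 := by
    intro hz
    have : ⟪p, z⟫ = 1 := by rw [inner_add_right, real_inner_smul_right, hpw, hpp]; ring
    simp [hz] at this
  refine ⟨‖z‖⁻¹ • z, norm_smul_inv_norm hz, fun x hpx hwx => ?_⟩
  have hw : w ≠ 0 := by rintro rfl; simp at hwx; linarith
  have ht : 0 < t := div_pos hu (by positivity)
  have htw : t * ‖w‖ ^ 2 = u := div_mul_cancel₀ u (by positivity)
  have hnorm : ‖z‖ ^ 2 = 1 + t * u := by
    rw [norm_add_sq_real, hp, real_inner_smul_right, hpw, norm_smul, mul_pow, Real.norm_eq_abs,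
      sq_abs, ← htw]
    ring
  have hzx : ⟪z, x⟫ = c + t * ⟪w, x⟫ := by
    rw [inner_add_left, real_inner_smul_left, hpx]
  -- `(c + t u)² ≥ c² (1 + t u) = (c ‖z‖)²`, as `c ≤ 1`
  have hle : c * ‖z‖ ≤ c + t * u := by
    refine abs_le_of_sq_le_sq' ?_ (by positivity) |>.2
    rw [mul_pow, hnorm]
    nlinarith [mul_nonneg (mul_pos ht hu).le (mul_nonneg hc₀ (by linarith : 0 ≤ 2 - c)),
      sq_nonneg (t * u)]
  rw [real_inner_smul_left, hzx, inv_mul_eq_div, lt_div_iff₀ (norm_pos_iff.2 hz)]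
  nlinarith [mul_lt_mul_of_pos_left hwx ht]

theorem le_ciSup_arccos_inner_iff {ι : Type*} [Finite ι] [Nonempty ι] {a : ι → E}
    (ha : ∀ i, ‖a i‖ = 1) {q : E} (hq : ‖q‖ = 1) {ρ : ℝ} (hρ₀ : 0 ≤ ρ) (hρ : ρ ≤ π) :
    ρ ≤ ⨆ i, arccos ⟪q, a i⟫ ↔ ∃ i, ⟪q, a i⟫ ≤ cos ρ := by
  rw [le_ciSup_iff_exists_le]
  refine exists_congr fun i => ?_
  have hqa := abs_real_inner_le_norm q (a i)
  rw [hq, ha, one_mul, abs_le] at hqa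
  exact le_arccos_iff_le_cos hqa.1 hqa.2 hρ₀ hρ

section Cap

variable {ι : Type*} {p : E} {a : ι → E} {c : ℝ}

theorem exists_inner_le_of_zero_mem_convexHull_orthogonalProjection (hp : ‖p‖ = 1)
    (hc : 0 ≤ c) (hpa : ∀ i, ⟪p, a i⟫ = c)
    (h0 : (0 : E) ∈ convexHull ℝ
      (range fun i => ((Submodule.orthogonalProjectionOnto (ℝ ∙ p)ᗮ (a i) : (ℝ ∙ p)ᗮ) : E)))
    {q : E} (hq : ‖q‖ ≤ 1) : ∃ i, ⟪q, a i⟫ ≤ c := by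
  obtain ⟨i, hi⟩ := exists_inner_nonpos_of_zero_mem_convexHull h0 q
  rw [Submodule.orthogonalProjectionOnto_orthogonal, Submodule.coe_mk,
    Submodule.starProjection_unit_singleton ℝ hp, hpa, inner_sub_right,
    real_inner_smul_right] at hi
  have hqp : ⟪q, p⟫ ≤ 1 := by nlinarith [real_inner_le_norm q p, norm_nonneg q]
  exact ⟨i, by nlinarith⟩

theorem exists_norm_eq_one_forall_lt_inner_of_zero_notMem_convexHull [CompleteSpace E] [Finite ι]
    (hp : ‖p‖ = 1) (hc₀ : 0 ≤ c) (hc₁ : c ≤ 1) (hpa : ∀ i, ⟪p, a i⟫ = c)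
    (h0 : (0 : E) ∉ convexHull ℝ
      (range fun i => ((Submodule.orthogonalProjectionOnto (ℝ ∙ p)ᗮ (a i) : (ℝ ∙ p)ᗮ) : E))) :
    ∃ q : E, ‖q‖ = 1 ∧ ∀ i, c < ⟪q, a i⟫ := by
  obtain ⟨v, u, hu, hv⟩ := exists_pos_lt_inner_of_zero_notMem_convexHull h0
  obtain ⟨q, hq, hqa⟩ := exists_norm_eq_one_lt_inner_of_inner_eq_zero hp
    (Submodule.mem_orthogonal_singleton_iff_inner_right.1
      ((ℝ ∙ p)ᗮ.starProjection_apply_mem v)) hc₀ hc₁ hu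
  refine ⟨q, hq, fun i => hqa _ (hpa i) ?_⟩
  rw [Submodule.inner_starProjection_left_eq_right, Submodule.starProjection_apply]
  exact hv i

end Cap

end InnerProductSpace

theorem stmt6_general {m : ℕ} (hm : 0 < m)
    (a : Fin m → EuclideanSpace ℝ (Fin m)) (ha : ∀ i, ‖a i‖ = 1)
    (p : EuclideanSpace ℝ (Fin m)) (hp : ‖p‖ = 1) (ρ : ℝ)
    (hρ0 : 0 ≤ ρ) (hρ : ρ < π / 2)
    (hbd : ∀ i, ⟪a i, p⟫ = Real.cos ρ) :
    ((ρ = ⨆ i, Real.arccos (⟪p, a i⟫) ∧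
        ∀ q : EuclideanSpace ℝ (Fin m), ‖q‖ = 1 →
          ρ ≤ ⨆ i, Real.arccos (⟪q, a i⟫)) ↔
      (0 : EuclideanSpace ℝ (Fin m)) ∈ convexHull ℝ
        (Set.range fun i =>
          ((Submodule.orthogonalProjectionOnto (ℝ ∙ p)ᗮ (a i) : (ℝ ∙ p)ᗮ) : EuclideanSpace ℝ (Fin m)))) := by
  have : Nonempty (Fin m) := ⟨⟨0, hm⟩⟩
  have hρπ : ρ ≤ π := by linarith [pi_pos]
  have hcos : 0 < cos ρ := cos_pos_of_mem_Ioo ⟨by linarith [pi_pos], hρ⟩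
  have hpa : ∀ i, ⟪p, a i⟫ = cos ρ := fun i => by rw [real_inner_comm, hbd]
  have hcenter : ρ = ⨆ i, arccos ⟪p, a i⟫ := by
    simp only [hpa, arccos_cos hρ0 hρπ, ciSup_const]
  rw [and_iff_right hcenter]
  constructor
  · intro hmin
    by_contra h0
    obtain ⟨q, hq, hqa⟩ :=
      exists_norm_eq_one_forall_lt_inner_of_zero_notMem_convexHull hp hcos.le (cos_le_one ρ) hpa h0
    obtain ⟨i, hi⟩ := (le_ciSup_arccos_inner_iff ha hq hρ0 hρπ).1 (hmin q hq)
    exact (hqa i).not_ge hi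
  · intro h0 q hq
    exact (le_ciSup_arccos_inner_iff ha hq hρ0 hρπ).2
      (exists_inner_le_of_zero_mem_convexHull_orthogonalProjection hp hcos.le hpa h0 hq.le)

theorem stmt6 {m : ℕ} (hm : 0 < m)
    (a : Fin m → EuclideanSpace ℝ (Fin m)) (ha : ∀ i, ‖a i‖ = 1)
    (hindep : LinearIndependent ℝ a)
    (p : EuclideanSpace ℝ (Fin m)) (hp : ‖p‖ = 1) (ρ : ℝ)
    (hρ0 : 0 ≤ ρ) (hρ : ρ < π / 2)
    (hbd : ∀ i, ⟪a i, p⟫ = Real.cos ρ) :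
    ((ρ = ⨆ i, Real.arccos (⟪p, a i⟫) ∧
        ∀ q : EuclideanSpace ℝ (Fin m), ‖q‖ = 1 →
          ρ ≤ ⨆ i, Real.arccos (⟪q, a i⟫)) ↔
      (0 : EuclideanSpace ℝ (Fin m)) ∈ convexHull ℝ
        (Set.range fun i =>
          ((Submodule.orthogonalProjectionOnto (ℝ ∙ p)ᗮ (a i) : (ℝ ∙ p)ᗮ) : EuclideanSpace ℝ (Fin m)))) :=
  stmt6_general hm a ha p hp ρ hρ0 hρ hbd
end

section
/- For p ∈ S^{m-1}, ρ ∈ [0,π/2), and linearly independent unit vectors a_1,...,a_m ∈ ∂cap(p,ρ), the condition 0 ∈ conv(π_p a_1,...,π_p a_m) is equivalent to p ∈ cone(a_1,...,a_m). -/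
open Real Set
open scoped RealInnerProductSpace InnerProductSpace Pointwise

/-! Since `⟪a i, p⟫ = cos ρ`, the projection of `a i` along the unit vector `p` is
`a i - cos ρ • p`, so `0` lies in the convex hull of the projections iff `cos ρ • p` lies in the
convex hull of the `a i`. Pairing a conic combination `p = ∑ c i • a i` with `p` gives
`cos ρ * ∑ c i = 1`, so multiplying the coefficients by `cos ρ > 0` turns conic combinations
representing `p` into convex combinations representing `cos ρ • p`, and back. -/

theorem mem_convexHull_range_iff_exists_sum {R E ι : Type*} [Field R] [LinearOrder R]
    [IsStrictOrderedRing R] [AddCommGroup E] [Module R E] [Fintype ι] {v : ι → E} {x : E} :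
    x ∈ convexHull R (range v) ↔
      ∃ w : ι → R, (∀ i, 0 ≤ w i) ∧ ∑ i, w i = 1 ∧ ∑ i, w i • v i = x := by
  classical
  refine ⟨fun hx => ?_, fun ⟨w, hw₀, hw₁, hx⟩ => mem_convexHull_of_exists_fintype w v hw₀ hw₁
    (fun i => mem_range_self i) hx⟩
  have hv : range v = Fintype.linearCombination R v '' range fun i => Pi.single i 1 := by
    rw [← range_comp]; congr 1; funext i; simp
  rw [hv, ← LinearMap.image_convexHull, convexHull_rangle_single_eq_stdSimplex] at hx
  obtain ⟨w, ⟨hw₀, hw₁⟩, rfl⟩ := hx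
  exact ⟨w, hw₀, hw₁, by simp [Fintype.linearCombination_apply]⟩

theorem zero_mem_convexHull_range_sub_iff {R E ι : Type*} [Ring R] [PartialOrder R]
    [AddCommGroup E] [Module R E] (v : ι → E) (q : E) :
    0 ∈ convexHull R (range fun i => v i - q) ↔ q ∈ convexHull R (range v) := by
  have hrange : (range fun i => v i - q) = -q +ᵥ range v := by
    rw [← image_vadd, ← range_comp]; congr 1; funext i; simp [sub_eq_neg_add]
  rw [hrange, convexHull_vadd, mem_vadd_set_iff_neg_vadd_mem, vadd_eq_add, neg_neg, add_zero]

theorem Submodule.coe_orthogonalProjectionOnto_orthogonal_unit_singleton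
    {𝕜 E : Type*} [RCLike 𝕜] [NormedAddCommGroup E] [InnerProductSpace 𝕜 E]
    {v : E} (hv : ‖v‖ = 1) (w : E) :
    ((𝕜 ∙ v)ᗮ.orthogonalProjectionOnto w : E) = w - ⟪v, w⟫_𝕜 • v := by
  rw [orthogonalProjectionOnto_orthogonal, coe_mk, starProjection_unit_singleton 𝕜 hv]

theorem smul_mem_convexHull_range_iff_exists_nonneg_sum
    {E ι : Type*} [NormedAddCommGroup E] [InnerProductSpace ℝ E] [Fintype ι]
    {a : ι → E} {p : E} {k : ℝ} (hk : 0 < k) (hp : ‖p‖ = 1) (hap : ∀ i, ⟪a i, p⟫ = k) :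
    k • p ∈ convexHull ℝ (range a) ↔ ∃ c : ι → ℝ, (∀ i, 0 ≤ c i) ∧ p = ∑ i, c i • a i := by
  rw [mem_convexHull_range_iff_exists_sum]
  constructor
  · rintro ⟨w, hw₀, -, hw⟩
    refine ⟨fun i => k⁻¹ * w i, fun i => mul_nonneg (inv_nonneg.2 hk.le) (hw₀ i), ?_⟩
    simp_rw [mul_smul, ← Finset.smul_sum, hw, smul_smul, inv_mul_cancel₀ hk.ne', one_smul]
  · rintro ⟨c, hc₀, hc⟩
    have hsum : ∑ i, k * c i = 1 := by
      have hpair := congrArg (⟪·, p⟫) hc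
      simp only [sum_inner, real_inner_smul_left, hap, real_inner_self_eq_norm_sq, hp,
        one_pow] at hpair
      rw [hpair]
      exact Finset.sum_congr rfl fun i _ => mul_comm _ _
    refine ⟨fun i => k * c i, fun i => mul_nonneg hk.le (hc₀ i), hsum, ?_⟩
    simp_rw [mul_smul, ← Finset.smul_sum, ← hc]

theorem stmt7_general {m : ℕ}
    (a : Fin m → EuclideanSpace ℝ (Fin m))
    (p : EuclideanSpace ℝ (Fin m)) (hp : ‖p‖ = 1) (ρ : ℝ)
    (hρ0 : 0 ≤ ρ) (hρ : ρ < π / 2)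
    (hbd : ∀ i, ⟪a i, p⟫ = Real.cos ρ) :
    ((0 : EuclideanSpace ℝ (Fin m)) ∈ convexHull ℝ
        (Set.range fun i =>
          ((Submodule.orthogonalProjectionOnto (ℝ ∙ p)ᗮ (a i) : (ℝ ∙ p)ᗮ) : EuclideanSpace ℝ (Fin m)))
      ↔ ∃ c : Fin m → ℝ, (∀ i, 0 ≤ c i) ∧ p = ∑ i, c i • a i) := by
  have hcos : 0 < cos ρ := cos_pos_of_mem_Ioo ⟨by linarith [pi_pos], hρ⟩
  have hproj : (fun i => ((ℝ ∙ p)ᗮ.orthogonalProjectionOnto (a i) : EuclideanSpace ℝ (Fin m)))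
      = fun i => a i - cos ρ • p := by
    funext i
    rw [Submodule.coe_orthogonalProjectionOnto_orthogonal_unit_singleton hp, real_inner_comm, hbd]
  rw [hproj, zero_mem_convexHull_range_sub_iff,
    smul_mem_convexHull_range_iff_exists_nonneg_sum hcos hp hbd]

theorem stmt7 {m : ℕ} (hm : 0 < m)
    (a : Fin m → EuclideanSpace ℝ (Fin m)) (ha : ∀ i, ‖a i‖ = 1)
    (hindep : LinearIndependent ℝ a)
    (p : EuclideanSpace ℝ (Fin m)) (hp : ‖p‖ = 1) (ρ : ℝ)
    (hρ0 : 0 ≤ ρ) (hρ : ρ < π / 2)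
    (hbd : ∀ i, ⟪a i, p⟫ = Real.cos ρ) :
    ((0 : EuclideanSpace ℝ (Fin m)) ∈ convexHull ℝ
        (Set.range fun i =>
          ((Submodule.orthogonalProjectionOnto (ℝ ∙ p)ᗮ (a i) : (ℝ ∙ p)ᗮ) : EuclideanSpace ℝ (Fin m)))
      ↔ ∃ c : Fin m → ℝ, (∀ i, 0 ≤ c i) ∧ p = ∑ i, c i • a i) :=
  stmt7_general a p hp ρ hρ0 hρ hbd
end
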